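/- Let f = g ∗ 1 where g is a real essentially bounded arithmetic function supported in [1,Q] with Q ≪ N. Then for all positive integers H, ∑_{1 ≤ a ≤ H} C_f(a) = R_1(f)² N H + ∑_{q ≤ Q} g(q) T_f(q,N,H) + O_ε(N^ε Q H), where C_f(a) = ∑_{n∼N} f(n) f(n−a). -/

import Mathlib

open Finset
open scoped Classical

noncomputable section

/-- `e(α) = e^{2πiα}`. -/
def expi (α : ℝ) : ℂ := Complex.exp (2 * Real.pi * Complex.I * α)

/-- The sieve function of range `Q` attached to the Eratosthenes transform `g`:
`f(n) = ∑_{d ∣ n, d ≤ Q} g(d)`. -/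
def sieveFn (g : ℕ → ℝ) (Q : ℕ) (n : ℕ) : ℝ :=
  ∑ d ∈ n.divisors.filter (fun d => d ≤ Q), g d

/-- The sieve function evaluated at integer arguments (used for shifted arguments
`f(n-a)`, divisibility being understood in `ℤ`). -/
def sieveZ (g : ℕ → ℝ) (Q : ℕ) (m : ℤ) : ℝ :=
  ∑ d ∈ Finset.Icc 1 Q, if (d : ℤ) ∣ m then g d else 0

/-- `g` is essentially bounded, with constant `Cg ε` for the exponent `ε`:
`g(d) ≪_ε d^ε` for every `ε > 0`. -/
def EssBddWith (Cg : ℝ → ℝ) (g : ℕ → ℝ) : Prop :=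
  ∀ ε : ℝ, 0 < ε → ∀ d : ℕ, 1 ≤ d → |g d| ≤ Cg ε * (d : ℝ) ^ ε

/-- `g` is supported in `[1,Q]`. -/
def SuppIn (g : ℕ → ℝ) (Q : ℕ) : Prop := ∀ d : ℕ, g d ≠ 0 → 1 ≤ d ∧ d ≤ Q

/-- The restricted weight `w_H`. -/
def wH (w : ℝ → ℝ) (H : ℕ) (h : ℤ) : ℝ := if |h| ≤ (H : ℤ) then w h else 0

/-- `ŵ_H(β) = ∑_{0 ≤ |h| ≤ H} w(h) e(hβ)`. -/
def wHat (w : ℝ → ℝ) (H : ℕ) (β : ℝ) : ℂ :=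
  ∑ h ∈ Finset.Icc (-(H : ℤ)) (H : ℤ), (w h : ℂ) * expi (h * β)

/-- `ŵ_H(0)`, as a real number. -/
def wHat0 (w : ℝ → ℝ) (H : ℕ) : ℝ := ∑ h ∈ Finset.Icc (-(H : ℤ)) (H : ℤ), w h

/-- The correlation `W_H(a) = ∑_h w_H(h) w_H(h-a)` of `w_H`. -/
def WHcorr (w : ℝ → ℝ) (H : ℕ) (a : ℤ) : ℝ :=
  ∑ h ∈ Finset.Icc (-(H : ℤ)) (H : ℤ), wH w H h * wH w H (h - a)

/-- `Ŵ_H(β) = ∑_{0 ≤ |h| ≤ 2H} W_H(h) e(hβ)`. -/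
def WHat (w : ℝ → ℝ) (H : ℕ) (β : ℝ) : ℂ :=
  ∑ h ∈ Finset.Icc (-(2 * H : ℤ)) (2 * H : ℤ), (WHcorr w H h : ℂ) * expi (h * β)

/-- `Ŵ_H(0)`, as a real number. -/
def WHat0 (w : ℝ → ℝ) (H : ℕ) : ℝ :=
  ∑ h ∈ Finset.Icc (-(2 * H : ℤ)) (2 * H : ℤ), WHcorr w H h

/-- `L¹_ℓ(F) = (1/ℓ) ∑_{j<ℓ, (j,ℓ)=1} |F(j/ℓ)|` (the sum being over `j ≥ 1`). -/
def Lone (F : ℝ → ℂ) (ℓ : ℕ) : ℝ :=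
  (ℓ : ℝ)⁻¹ * ∑ j ∈ (Finset.Ico 1 ℓ).filter (fun j => Nat.Coprime j ℓ), ‖F (j / ℓ)‖

/-- `L²_ℓ(F) = (1/ℓ²) ∑_{j<ℓ} |F(j/ℓ)|²` (the sum being over `j ≥ 1`). -/
def Ltwo (F : ℝ → ℂ) (ℓ : ℕ) : ℝ :=
  ((ℓ : ℝ) ^ 2)⁻¹ * ∑ j ∈ Finset.Ico 1 ℓ, ‖F (j / ℓ)‖ ^ 2

/-- A good weight: `w_H` is uniformly bounded as `H → ∞` and
`L²_ℓ(ŵ_H) ≪ H/ℓ` for all `ℓ ≥ 1`. -/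
def GoodWeight (w : ℝ → ℝ) : Prop :=
  (∃ B : ℝ, ∀ (H : ℕ) (h : ℤ), |wH w H h| ≤ B) ∧
    ∃ C : ℝ, ∀ H ℓ : ℕ, 1 ≤ H → 1 ≤ ℓ → Ltwo (wHat w H) ℓ ≤ C * H / ℓ

/-- `∑_{n ∼ N, n ≡ a (mod q)} f(n)`. -/
def bandSum (f : ℕ → ℝ) (N q : ℕ) (a : ℤ) : ℝ :=
  ∑ n ∈ (Finset.Ioc N (2 * N)).filter (fun (n : ℕ) => (n : ℤ) % q = a % q), f n

/-- `T_{w,f}(q,N,H) = ∑_{0≤|a|≤H} w(a) ∑_{n∼N, n≡a (q)} f(n) − (ŵ_H(0)/q) ∑_{n∼N} f(n)`. -/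
def Twf (w : ℝ → ℝ) (f : ℕ → ℝ) (q N H : ℕ) : ℝ :=
  (∑ a ∈ Finset.Icc (-(H : ℤ)) (H : ℤ), w a * bandSum f N q a) -
    wHat0 w H * (∑ n ∈ Finset.Ioc N (2 * N), f n) / q

/-- `T_{W,f}(q,N,H) = ∑_a W_H(a) ∑_{n∼N, n≡a (q)} f(n) − (Ŵ_H(0)/q) ∑_{n∼N} f(n)`. -/
def TWf (w : ℝ → ℝ) (f : ℕ → ℝ) (q N H : ℕ) : ℝ :=
  (∑ a ∈ Finset.Icc (-(2 * H : ℤ)) (2 * H : ℤ), WHcorr w H a * bandSum f N q a) -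
    WHat0 w H * (∑ n ∈ Finset.Ioc N (2 * N), f n) / q

/-- `T_f(q,N,H) = ∑_{1≤a≤H} ∑_{n∼N, n≡a (q)} f(n) − (H/q) ∑_{n∼N} f(n)`. -/
def Tf (f : ℕ → ℝ) (q N H : ℕ) : ℝ :=
  (∑ a ∈ Finset.Icc 1 H, bandSum f N q (a : ℤ)) -
    (H : ℝ) * (∑ n ∈ Finset.Ioc N (2 * N), f n) / q

/-- The first Ramanujan coefficient `R_1(f) = ∑_{d ≤ Q} g(d)/d`. -/
def Rcoef1 (g : ℕ → ℝ) (Q : ℕ) : ℝ := ∑ d ∈ Finset.Icc 1 Q, g d / d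

/-- The `ℓ`-th Ramanujan coefficient `R_ℓ(f) = ∑_{d ≤ Q, ℓ ∣ d} g(d)/d`. -/
def Rcoef (g : ℕ → ℝ) (Q ℓ : ℕ) : ℝ :=
  ∑ d ∈ (Finset.Icc 1 Q).filter (fun d => ℓ ∣ d), g d / d

/-- The short weighted sum `∑_n w_H(n−x) f(n)`. -/
def shortSum (w : ℝ → ℝ) (H : ℕ) (f : ℕ → ℝ) (x : ℕ) : ℝ :=
  ∑ n ∈ Finset.Icc 1 (x + H), wH w H ((n : ℤ) - (x : ℤ)) * f n

/-- The mixed weighted Selberg integral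
`J_{w,(f₁,f₂)}(N,H) = ∑_{x∼N} ∏_j (∑_n w_H(n−x) f_j(n) − ŵ_H(0) R_1(f_j))`,
where `r_j = R_1(f_j)`. -/
def Jmix (w : ℝ → ℝ) (f₁ f₂ : ℕ → ℝ) (r₁ r₂ : ℝ) (N H : ℕ) : ℝ :=
  ∑ x ∈ Finset.Ioc N (2 * N),
    (shortSum w H f₁ x - wHat0 w H * r₁) * (shortSum w H f₂ x - wHat0 w H * r₂)

/-- The Selberg integral `J_f(N,H) = ∑_{x∼N} |∑_{x<n≤x+H} f(n) − R_1(f) H|²`,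
where `r = R_1(f)`. -/
def Jf (f : ℕ → ℝ) (r : ℝ) (N H : ℕ) : ℝ :=
  ∑ x ∈ Finset.Ioc N (2 * N), ((∑ n ∈ Finset.Ioc x (x + H), f n) - r * H) ^ 2

/-- The correlation `C_{f₁,f₂}(a) = ∑_{n∼N} f₁(n) f₂(n−a)` of the sieve functions
attached to `g₁, g₂` of ranges `Q₁, Q₂`. -/
def corrFn (g₁ g₂ : ℕ → ℝ) (Q₁ Q₂ N : ℕ) (a : ℤ) : ℝ :=
  ∑ n ∈ Finset.Ioc N (2 * N), sieveFn g₁ Q₁ n * sieveZ g₂ Q₂ ((n : ℤ) - a)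

/-- The unit step weight `u`. -/
def ustep : ℝ → ℝ := fun x => if 0 < x then 1 else 0

/-- The Cesàro weight `C_H`. -/
def cesaro (H : ℕ) : ℝ → ℝ := fun x => if |x| ≤ (H : ℝ) then 1 - |x| / H else 0

/-- Goldston's truncated divisor sum `Λ_R(n) = ∑_{d∣n, d≤R} μ(d) log(R/d)`. -/
def LambdaR (R : ℕ) (n : ℕ) : ℝ :=
  ∑ d ∈ n.divisors.filter (fun d => d ≤ R),
    ((ArithmeticFunction.moebius d : ℤ) : ℝ) * Real.log ((R : ℝ) / d)

/-- Goldston's truncated divisor sum at integer arguments. -/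
def LambdaRZ (R : ℕ) (m : ℤ) : ℝ :=
  ∑ d ∈ Finset.Icc 1 R,
    if (d : ℤ) ∣ m then ((ArithmeticFunction.moebius d : ℤ) : ℝ) * Real.log ((R : ℝ) / d) else 0

/-! Exchanging the order of summation, `∑_{a ≤ H} C_f(a) = ∑_q g(q) ∑_{a ≤ H} ∑_{n ∼ N, n ≡ a (q)} f(n)`,
so the left side equals exactly `R_1 H (∑_{n ∼ N} f(n) - R_1 N)`. Each `d ≤ Q` has `N/d + O(1)`
multiples in `(N, 2N]`, whence `|∑_{n ∼ N} f(n) - R_1 N| ≤ ∑_{d ≤ Q} |g(d)| ≪ Q^{1+δ}`, while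
`|R_1| ≪ Q^δ log Q ≪ Q^{2δ}`; take `δ = ε/3` and use `Q ≪ N`. -/

lemma sieveFn_eq_sum_Icc (g : ℕ → ℝ) (Q : ℕ) {n : ℕ} (hn : n ≠ 0) :
    sieveFn g Q n = ∑ d ∈ Icc 1 Q, if d ∣ n then g d else 0 := by
  rw [sieveFn, ← sum_filter]
  refine sum_congr (ext fun d => ?_) fun _ _ => rfl
  simp only [mem_filter, Nat.mem_divisors, mem_Icc]
  exact ⟨fun ⟨⟨hdn, _⟩, hdQ⟩ => ⟨⟨Nat.pos_of_dvd_of_pos hdn (Nat.pos_of_ne_zero hn), hdQ⟩, hdn⟩,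
    fun ⟨⟨_, hdQ⟩, hdn⟩ => ⟨⟨hdn, hn⟩, hdQ⟩⟩

lemma corrFn_eq_sum_bandSum (g₁ g₂ : ℕ → ℝ) (Q₁ Q₂ N : ℕ) (a : ℤ) :
    corrFn g₁ g₂ Q₁ Q₂ N a = ∑ q ∈ Icc 1 Q₂, g₂ q * bandSum (sieveFn g₁ Q₁) N q a := by
  simp only [corrFn, sieveZ, bandSum, mul_sum, sum_filter, mul_ite, mul_zero]
  rw [sum_comm]
  refine sum_congr rfl fun q _ => sum_congr rfl fun n _ => ?_
  rw [mul_comm]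
  exact if_congr (dvd_sub_comm.trans Int.modEq_iff_dvd.symm) rfl rfl

lemma sum_corrFn_sub_eq (g : ℕ → ℝ) (Q N H : ℕ) :
    (∑ a ∈ Icc 1 H, corrFn g g Q Q N a) - Rcoef1 g Q ^ 2 * N * H -
        ∑ q ∈ Icc 1 Q, g q * Tf (sieveFn g Q) q N H =
      Rcoef1 g Q * H * (∑ n ∈ Ioc N (2 * N), sieveFn g Q n - Rcoef1 g Q * N) := by
  have hT : ∑ q ∈ Icc 1 Q, g q * Tf (sieveFn g Q) q N H =
      ∑ a ∈ Icc 1 H, corrFn g g Q Q N a -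
        H * (∑ n ∈ Ioc N (2 * N), sieveFn g Q n) * Rcoef1 g Q := by
    simp only [Tf, corrFn_eq_sum_bandSum, Rcoef1, mul_sub, sum_sub_distrib]
    rw [sum_comm]
    congr 1
    · exact sum_congr rfl fun q _ => mul_sum ..
    · exact (sum_congr rfl fun q _ => by ring).trans (mul_sum ..).symm
  rw [hT]
  ring

lemma card_filter_dvd_Ioc (d : ℕ) {N M : ℕ} (h : N ≤ M) :
    #{n ∈ Ioc N M | d ∣ n} = M / d - N / d := by
  rw [← Nat.Ioc_filter_dvd_card_eq_div, ← Nat.Ioc_filter_dvd_card_eq_div,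
    ← card_sdiff_of_subset (filter_subset_filter _ (Ioc_subset_Ioc_right h))]
  congr 1
  ext n
  simp only [mem_filter, mem_Ioc, mem_sdiff]
  omega

lemma sum_Ioc_sieveFn (g : ℕ → ℝ) (Q N M : ℕ) :
    ∑ n ∈ Ioc N M, sieveFn g Q n = ∑ d ∈ Icc 1 Q, g d * #{n ∈ Ioc N M | d ∣ n} := by
  rw [sum_congr rfl fun n hn => sieveFn_eq_sum_Icc g Q (by rw [mem_Ioc] at hn; omega), sum_comm]
  simp [sum_ite, mul_comm]

lemma abs_natCast_sub_div_sub_le_one {d : ℕ} (hd : 0 < d) {N M : ℕ} (h : N ≤ M) :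
    |((M / d - N / d : ℕ) : ℝ) - ((M : ℝ) - N) / d| ≤ 1 := by
  have hfloor (m : ℕ) : ((m / d : ℕ) : ℝ) ≤ m / d ∧ (m : ℝ) / d < (m / d : ℕ) + 1 := by
    rw [← Nat.floor_div_eq_div (K := ℝ)]
    exact ⟨Nat.floor_le (by positivity), Nat.lt_floor_add_one _⟩
  rw [Nat.cast_sub (Nat.div_le_div_right h), sub_div, abs_le]
  constructor <;> linarith [hfloor M, hfloor N]

lemma abs_sum_Ioc_sieveFn_sub_le {g : ℕ → ℝ} {Q : ℕ} {B : ℝ} (hB : ∀ d ∈ Icc 1 Q, |g d| ≤ B)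
    {N M : ℕ} (h : N ≤ M) :
    |∑ n ∈ Ioc N M, sieveFn g Q n - Rcoef1 g Q * (M - N)| ≤ B * Q := by
  have hsum : ∑ n ∈ Ioc N M, sieveFn g Q n - Rcoef1 g Q * (M - N) =
      ∑ d ∈ Icc 1 Q, g d * (((M / d - N / d : ℕ) : ℝ) - ((M : ℝ) - N) / d) := by
    simp only [sum_Ioc_sieveFn, card_filter_dvd_Ioc _ h, Rcoef1, sum_mul, ← sum_sub_distrib]
    exact sum_congr rfl fun d _ => by ring
  calc _ ≤ ∑ d ∈ Icc 1 Q, |g d| * |((M / d - N / d : ℕ) : ℝ) - ((M : ℝ) - N) / d| := by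
        rw [hsum]; exact (abs_sum_le_sum_abs _ _).trans_eq (by simp only [abs_mul])
    _ ≤ ∑ _d ∈ Icc 1 Q, B * 1 := by
        refine sum_le_sum fun d hd => mul_le_mul (hB d hd) ?_ (abs_nonneg _)
          ((abs_nonneg _).trans (hB d hd))
        exact abs_natCast_sub_div_sub_le_one (mem_Icc.mp hd).1 h
    _ = B * Q := by simp [mul_comm]

lemma abs_Rcoef1_le {g : ℕ → ℝ} {Q : ℕ} {B : ℝ} (hB : ∀ d ∈ Icc 1 Q, |g d| ≤ B) :
    |Rcoef1 g Q| ≤ B * harmonic Q := by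
  rw [harmonic_eq_sum_Icc, Rat.cast_sum, mul_sum]
  refine (abs_sum_le_sum_abs _ _).trans (sum_le_sum fun d hd => ?_)
  rw [abs_div, Nat.abs_cast, Rat.cast_inv, Rat.cast_natCast, div_eq_mul_inv]
  exact mul_le_mul_of_nonneg_right (hB d hd) (by positivity)

lemma harmonic_le_mul_rpow {δ : ℝ} (hδ : 0 < δ) (n : ℕ) :
    (harmonic n : ℝ) ≤ (1 + 1 / δ) * (n : ℝ) ^ δ := by
  rcases Nat.eq_zero_or_pos n with rfl | hn
  · simp [Real.zero_rpow hδ.ne']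
  have hn1 : (1 : ℝ) ≤ n := by exact_mod_cast hn
  have hpow : 1 ≤ (n : ℝ) ^ δ := Real.one_le_rpow hn1 hδ.le
  have hlog : δ * Real.log n ≤ (n : ℝ) ^ δ := by
    rw [← Real.log_rpow (by positivity)]
    linarith [Real.log_le_sub_one_of_pos (by positivity : (0 : ℝ) < (n : ℝ) ^ δ)]
  calc (harmonic n : ℝ) ≤ 1 + Real.log n := harmonic_le_one_add_log n
    _ ≤ (n : ℝ) ^ δ + (n : ℝ) ^ δ / δ := by
        gcongr
        rwa [le_div_iff₀ hδ, mul_comm]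
    _ = (1 + 1 / δ) * (n : ℝ) ^ δ := by ring

lemma abs_le_rpow_of_essBddWith {Cg : ℝ → ℝ} {g : ℕ → ℝ} (hg : EssBddWith Cg g) {δ : ℝ}
    (hδ : 0 < δ) {Q d : ℕ} (hd : d ∈ Icc 1 Q) : |g d| ≤ |Cg δ| * (Q : ℝ) ^ δ := by
  obtain ⟨hd1, hdQ⟩ := mem_Icc.mp hd
  calc |g d| ≤ Cg δ * (d : ℝ) ^ δ := hg δ hδ d hd1
    _ ≤ |Cg δ| * (Q : ℝ) ^ δ := by gcongr; exact le_abs_self _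

lemma abs_sum_corrFn_sub_le {Cg : ℝ → ℝ} {g : ℕ → ℝ} (hg : EssBddWith Cg g) {δ : ℝ}
    (hδ : 0 < δ) (N H Q : ℕ) :
    |(∑ a ∈ Icc 1 H, corrFn g g Q Q N a) - Rcoef1 g Q ^ 2 * N * H -
        ∑ q ∈ Icc 1 Q, g q * Tf (sieveFn g Q) q N H| ≤
      |Cg δ| ^ 2 * (1 + 1 / δ) * ((Q : ℝ) ^ δ) ^ 3 * Q * H := by
  set B := |Cg δ| * (Q : ℝ) ^ δ
  have hB : ∀ d ∈ Icc 1 Q, |g d| ≤ B := fun d hd => abs_le_rpow_of_essBddWith hg hδ hd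
  have hR : |Rcoef1 g Q| ≤ B * ((1 + 1 / δ) * (Q : ℝ) ^ δ) :=
    (abs_Rcoef1_le hB).trans (by gcongr; exact harmonic_le_mul_rpow hδ Q)
  have hS : |∑ n ∈ Ioc N (2 * N), sieveFn g Q n - Rcoef1 g Q * N| ≤ B * Q := by
    simpa [two_mul] using abs_sum_Ioc_sieveFn_sub_le hB (by omega : N ≤ 2 * N)
  rw [sum_corrFn_sub_eq, abs_mul, abs_mul, Nat.abs_cast]
  calc _ ≤ B * ((1 + 1 / δ) * (Q : ℝ) ^ δ) * H * (B * Q) := by gcongr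
    _ = _ := by ring

/-- formula (7): for `f = g ∗ 1` with `g` real, essentially bounded and
supported in `[1,Q]`, `Q ≪ N`, and all positive integers `H`,
`∑_{1≤a≤H} C_f(a) = R_1(f)² N H + ∑_{q≤Q} g(q) T_f(q,N,H) + O_ε(N^ε Q H)`. -/
theorem statement12 (A : ℝ) (hA : 0 < A) (Cg : ℝ → ℝ) (ε : ℝ) (hε : 0 < ε) :
    ∃ C : ℝ, 0 < C ∧ ∀ (N H Q : ℕ) (g : ℕ → ℝ),
      0 < N → 0 < H → 0 < Q → (Q : ℝ) ≤ A * N →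
      EssBddWith Cg g → SuppIn g Q →
      |(∑ a ∈ Finset.Icc 1 H, corrFn g g Q Q N (a : ℤ)) -
          Rcoef1 g Q ^ 2 * N * H -
          ∑ q ∈ Finset.Icc 1 Q, g q * Tf (sieveFn g Q) q N H| ≤
        C * (N : ℝ) ^ ε * Q * H := by
  refine ⟨(|Cg (ε / 3)| ^ 2 + 1) * (1 + 3 / ε) * A ^ ε, by positivity, ?_⟩
  intro N H Q g _ _ _ hQA hg _
  have hQε : ((Q : ℝ) ^ (ε / 3)) ^ 3 ≤ A ^ ε * (N : ℝ) ^ ε := by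
    rw [← Real.rpow_mul_natCast (Nat.cast_nonneg Q), ← Real.mul_rpow hA.le (Nat.cast_nonneg N),
      Nat.cast_ofNat, div_mul_cancel₀ ε three_ne_zero]
    exact Real.rpow_le_rpow (Nat.cast_nonneg Q) hQA hε.le
  calc _ ≤ |Cg (ε / 3)| ^ 2 * (1 + 3 / ε) * ((Q : ℝ) ^ (ε / 3)) ^ 3 * Q * H := by
        simpa only [one_div_div] using abs_sum_corrFn_sub_le hg (div_pos hε three_pos) N H Q
    _ ≤ (|Cg (ε / 3)| ^ 2 + 1) * (1 + 3 / ε) * (A ^ ε * (N : ℝ) ^ ε) * Q * H := by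
        gcongr
        linarith
    _ = _ := by ring

end
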